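/- arXiv:2209.04620 — 3 statements merged into one kernel-verified Lean document; each statement's English description precedes it below -/
import Mathlib

section
/- The function 𝒯₃(t,p,i,s) := ∫_t^T [(1−F(v−t+s))/(1−F(s))] w(v,p,i,v−t+s) dv possesses, at every point of D° = (0,T)×(0,∞)×𝒳×(0,∞), the directional derivative D_{t,s}𝒯₃(t,p,i,s) := lim_{ε→0} (𝒯₃(t+ε,p,i,s+ε) − 𝒯₃(t,p,i,s))/ε, which is continuous on D° and equals ∫_t^T [f(s)(1−F(v−t+s))/(1−F(s))²] w(v,p,i,v−t+s) dv − w(t,p,i,s). -/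
open MeasureTheory Filter Set Finset intervalIntegral

noncomputable section

/-- The state space `𝒳 = {1,2,3,4}`. -/
def stateS : Finset ℕ := {1, 2, 3, 4}

/-- The set `{j ∈ 𝒳 | j ≢ i}` : `j ≢ i` iff exactly one of `i, j` lies in `{1,2}`. -/
def conjS (i : ℕ) : Finset ℕ := if i ∈ ({1, 2} : Finset ℕ) then {3, 4} else {1, 2}

/-- `α(j) = (−1)^j`. -/
def alphaR (j : ℕ) : ℝ := (-1 : ℝ) ^ j

/-- `h = h₊ + h₋`. -/
def hsum (hp hm : ℝ → ℝ) : ℝ → ℝ := fun y => hp y + hm y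

/-- `h_{ij} = h₊` if `i + j` is even, `h₋` if `i + j` is odd. -/
def hijf (hp hm : ℝ → ℝ) (i j : ℕ) : ℝ → ℝ := if Even (i + j) then hp else hm

/-- `p_{ij}(y) = h_{ij}(y)/h(y)`. -/
def pijf (hp hm : ℝ → ℝ) (i j : ℕ) (y : ℝ) : ℝ := hijf hp hm i j y / hsum hp hm y

/-- `F(y) = 1 − exp(−∫₀^y h(v) dv)`. -/
def Ff (hp hm : ℝ → ℝ) (y : ℝ) : ℝ := 1 - Real.exp (-∫ v in (0:ℝ)..y, hsum hp hm v)

/-- `f(y) = h(y)·exp(−∫₀^y h(v) dv)`. -/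
def ff (hp hm : ℝ → ℝ) (y : ℝ) : ℝ := hsum hp hm y * Real.exp (-∫ v in (0:ℝ)..y, hsum hp hm v)

/-- Assumptions (A1)–(A4) on `h₊, h₋ : [0,∞) → [0,∞)`. -/
def hAssumptions (hp hm : ℝ → ℝ) : Prop :=
  (∀ y ∈ Set.Ici (0:ℝ), 0 ≤ hp y ∧ 0 ≤ hm y) ∧
  ContDiffOn ℝ 1 hp (Set.Ici 0) ∧ ContDiffOn ℝ 1 hm (Set.Ici 0) ∧
  (∃ c1 : ℝ, ∀ y ∈ Set.Ici (0:ℝ), hp y ≤ c1 ∧ hm y ≤ c1) ∧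
  Tendsto (fun y => ∫ v in (0:ℝ)..y, hp v) atTop atTop ∧
  Tendsto (fun y => ∫ v in (0:ℝ)..y, hm v) atTop atTop ∧
  (∀ y ∈ Set.Ici (0:ℝ), 0 < hsum hp hm y)

/-- Membership in the space `V` : continuity on `D = [0,T]×[0,∞)×𝒳×[0,∞)` together with
`sup_D |φ(t,p,i,s)|/(1+p) < ∞`. -/
def memV (T : ℝ) (φ : ℝ → ℝ → ℕ → ℝ → ℝ) : Prop :=
  (∀ i ∈ stateS, ContinuousOn (fun x : ℝ × ℝ × ℝ => φ x.1 x.2.1 i x.2.2)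
      (Set.Icc 0 T ×ˢ Set.Ici 0 ×ˢ Set.Ici 0)) ∧
  ∃ C : ℝ, ∀ t p s : ℝ, t ∈ Set.Icc (0:ℝ) T → p ∈ Set.Ici (0:ℝ) → s ∈ Set.Ici (0:ℝ) →
    ∀ i ∈ stateS, |φ t p i s| / (1 + p) ≤ C

/-- The norm `‖φ‖_V = sup_D |φ(t,p,i,s)|/(1+p)`. -/
def Vnorm (T : ℝ) (φ : ℝ → ℝ → ℕ → ℝ → ℝ) : ℝ :=
  sSup {r : ℝ | ∃ t p s : ℝ, ∃ i ∈ stateS, t ∈ Set.Icc (0:ℝ) T ∧ p ∈ Set.Ici (0:ℝ) ∧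
    s ∈ Set.Ici (0:ℝ) ∧ r = |φ t p i s| / (1 + p)}

/-- Continuity and at most linear growth of `g : [0,∞) → ℝ`. -/
def gOK (g : ℝ → ℝ) : Prop :=
  ContinuousOn g (Set.Ici 0) ∧ ∃ Cg : ℝ, ∀ p ∈ Set.Ici (0:ℝ), |g p| ≤ Cg * (1 + p)

/-- The operator `𝒯`. -/
def Tmap (T δ : ℝ) (hp hm : ℝ → ℝ) (g : ℝ → ℝ) (w φ : ℝ → ℝ → ℕ → ℝ → ℝ)
    (t p : ℝ) (i : ℕ) (s : ℝ) : ℝ :=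
  g p * ((1 - Ff hp hm (T - t + s)) / (1 - Ff hp hm s))
  + (∫ v in t..T, (ff hp hm (v - t + s) / (1 - Ff hp hm s)) *
      ∑ j ∈ conjS i, pijf hp hm i j (v - t + s) * φ v (p * (1 + δ * alphaR j)) j 0)
  + ∫ v in t..T, ((1 - Ff hp hm (v - t + s)) / (1 - Ff hp hm s)) * w v p i (v - t + s)

/-- `𝒯₃(t,p,i,s) = ∫_t^T [(1−F(v−t+s))/(1−F(s))]·w(v,p,i,v−t+s) dv`. -/
def T3 (T : ℝ) (hp hm : ℝ → ℝ) (w : ℝ → ℝ → ℕ → ℝ → ℝ) (t p : ℝ) (i : ℕ) (s : ℝ) : ℝ :=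
  ∫ v in t..T, ((1 - Ff hp hm (v - t + s)) / (1 - Ff hp hm s)) * w v p i (v - t + s)

/-!
Write `S = 1 - F = exp (-∫₀ h)`, so that `S' = -f`. Moving along the diagonal `(t + ε, s + ε)`
leaves `v - t + s` unchanged, hence
`𝒯₃(t + ε, p, i, s + ε) = S(s + ε)⁻¹ ∫_{t+ε}^T S(v - t + s) w(v, p, i, v - t + s) dv`
with an integrand independent of `ε`. The product rule and the fundamental theorem of calculus
give the derivative. For its continuity, `w(·, ·, i, ·)` is extended by Tietze to a continuous
function on `ℝ³`, which makes the remaining integral a continuous parametric integral.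
-/

theorem ContinuousOn.exists_continuous_eqOn_of_isClosed {X : Type*} [TopologicalSpace X]
    [NormalSpace X] {s : Set X} (hs : IsClosed s) {f : X → ℝ} (hf : ContinuousOn f s) :
    ∃ g : X → ℝ, Continuous g ∧ EqOn g f s := by
  obtain ⟨g, hg⟩ := ContinuousMap.exists_restrict_eq hs ⟨_, hf.domRestrict⟩
  exact ⟨g, g.continuous, fun x hx => DFunLike.congr_fun hg ⟨x, hx⟩⟩

theorem hasDerivAt_inv_mul_integral_shift {g k : ℝ → ℝ} {g' s t b : ℝ} (hg : HasDerivAt g g' s)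
    (hgs : g s ≠ 0) (hk : Continuous k) :
    HasDerivAt (fun e => (g (s + e))⁻¹ * ∫ v in (t + e)..b, k v)
      (-g' / g s ^ 2 * (∫ v in t..b, k v) + (g s)⁻¹ * -k t) 0 := by
  have hinv : HasDerivAt (fun e => (g (s + e))⁻¹) (-g' / g s ^ 2) 0 := by
    refine HasDerivAt.comp_const_add (f := fun y : ℝ => (g y)⁻¹) s 0 ?_
    rw [add_zero]
    exact hg.inv hgs
  have hint : HasDerivAt (fun e => ∫ v in (t + e)..b, k v) (-k t) 0 := by
    refine HasDerivAt.comp_const_add (f := fun u : ℝ => ∫ v in u..b, k v) t 0 ?_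
    rw [add_zero]
    exact integral_hasDerivAt_left (hk.intervalIntegrable _ _)
      (hk.stronglyMeasurableAtFilter volume _) hk.continuousAt
  have h := hinv.mul hint
  simp only [add_zero] at h
  exact h

theorem continuous_integral_diagonal {K : ℝ × ℝ × ℝ → ℝ} (hK : Continuous K) (b : ℝ) :
    Continuous fun x : ℝ × ℝ × ℝ => ∫ v in x.1..b, K (v, x.2.1, v - x.1 + x.2.2) := by
  have h := continuous_parametric_intervalIntegral_of_continuous
    (f := fun (x : ℝ × ℝ × ℝ) v => K (v, x.2.1, v - x.1 + x.2.2)) (a₀ := b) (μ := volume)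
    (hK.comp (by fun_prop)) continuous_fst
  exact h.neg.congr fun x => (integral_symm _ _).symm

/-- `h` is frozen at `h 0` on the negative axis, so that `survival h` is differentiable on all
of `ℝ` when `h` is continuous on `[0, ∞)`. -/
def survival (h : ℝ → ℝ) (y : ℝ) : ℝ := Real.exp (-∫ v in (0:ℝ)..y, h (max v 0))

section Survival

variable {h : ℝ → ℝ} {y : ℝ}

theorem survival_pos : 0 < survival h y := Real.exp_pos _

theorem survival_eq_of_nonneg (hy : 0 ≤ y) :
    survival h y = Real.exp (-∫ v in (0:ℝ)..y, h v) := by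
  refine congrArg (fun I => Real.exp (-I)) (integral_congr fun v hv => ?_)
  rw [uIcc_of_le hy] at hv
  simp only [max_eq_left hv.1]

variable (hh : ContinuousOn h (Set.Ici 0))
include hh

theorem hasDerivAt_survival (y : ℝ) :
    HasDerivAt (survival h) (-(h (max y 0) * survival h y)) y := by
  have hc : Continuous fun v => h (max v 0) :=
    hh.comp_continuous (continuous_id.max continuous_const) fun v => le_max_right v 0
  have hI : HasDerivAt (fun y => ∫ v in (0:ℝ)..y, h (max v 0)) (h (max y 0)) y :=
    integral_hasDerivAt_right (hc.intervalIntegrable _ _) (hc.stronglyMeasurableAtFilter volume _)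
      hc.continuousAt
  exact hI.neg.exp.congr_deriv (by simp only [survival, Pi.neg_apply]; ring)

theorem continuous_survival : Continuous (survival h) :=
  continuous_iff_continuousAt.2 fun y => (hasDerivAt_survival hh y).continuousAt

end Survival

section Distribution

variable {hp hm : ℝ → ℝ} {y : ℝ}

theorem one_sub_Ff_eq_survival (hy : 0 ≤ y) : 1 - Ff hp hm y = survival (hsum hp hm) y := by
  rw [Ff, sub_sub_cancel, survival_eq_of_nonneg hy]

theorem ff_eq_mul_survival (hy : 0 ≤ y) :
    ff hp hm y = hsum hp hm y * survival (hsum hp hm) y := by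
  rw [ff, survival_eq_of_nonneg hy]

variable {T : ℝ} {w : ℝ → ℝ → ℕ → ℝ → ℝ} {i : ℕ} {W : ℝ × ℝ × ℝ → ℝ}
  (hW : EqOn W (fun x => w x.1 x.2.1 i x.2.2) (Set.Icc 0 T ×ˢ Set.Ici 0 ×ˢ Set.Ici 0))
include hW

theorem integral_comp_one_sub_Ff_mul_eq (φ : ℝ → ℝ) {t p s : ℝ} (ht : t ∈ Set.Icc 0 T)
    (hp0 : 0 ≤ p) (hs : 0 ≤ s) :
    ∫ v in t..T, φ (1 - Ff hp hm (v - t + s)) * w v p i (v - t + s)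
      = ∫ v in t..T, φ (survival (hsum hp hm) (v - t + s)) * W (v, p, v - t + s) := by
  refine integral_congr fun v hv => ?_
  rw [uIcc_of_le ht.2] at hv
  have hy : 0 ≤ v - t + s := by linarith [hv.1]
  rw [one_sub_Ff_eq_survival hy]
  exact congrArg _ (hW (x := (v, p, v - t + s)) ⟨⟨ht.1.trans hv.1, hv.2⟩, hp0, hy⟩).symm

theorem T3_eq_survival {t p s : ℝ} (ht : t ∈ Set.Icc 0 T) (hp0 : 0 ≤ p) (hs : 0 ≤ s) :
    T3 T hp hm w t p i s = (survival (hsum hp hm) s)⁻¹ *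
      ∫ v in t..T, survival (hsum hp hm) (v - t + s) * W (v, p, v - t + s) := by
  rw [T3, one_sub_Ff_eq_survival hs,
    integral_comp_one_sub_Ff_mul_eq hW (· / survival (hsum hp hm) s) ht hp0 hs,
    ← intervalIntegral.integral_const_mul]
  simp only [div_eq_inv_mul, mul_assoc]

theorem integral_ff_mul_sub_eq_survival {t p s : ℝ} (ht : t ∈ Set.Icc 0 T) (hp0 : 0 ≤ p)
    (hs : 0 ≤ s) :
    (∫ v in t..T, (ff hp hm s * (1 - Ff hp hm (v - t + s)) / (1 - Ff hp hm s) ^ 2) *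
        w v p i (v - t + s)) - w t p i s
      = hsum hp hm s / survival (hsum hp hm) s *
        (∫ v in t..T, survival (hsum hp hm) (v - t + s) * W (v, p, v - t + s)) - W (t, p, s) := by
  have hS := (survival_pos (h := hsum hp hm) (y := s)).ne'
  have hWt : W (t, p, s) = w t p i s := hW ⟨ht, hp0, hs⟩
  rw [ff_eq_mul_survival hs, one_sub_Ff_eq_survival hs, hWt,
    integral_comp_one_sub_Ff_mul_eq hW
      (hsum hp hm s * survival (hsum hp hm) s * · / survival (hsum hp hm) s ^ 2) ht hp0 hs,
    ← intervalIntegral.integral_const_mul]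
  congr 1
  refine integral_congr fun v _ => ?_
  field_simp

variable (hh : ContinuousOn (hsum hp hm) (Set.Ici 0)) (hWc : Continuous W)
include hh hWc

theorem hasDerivAt_T3_diagonal {t p s : ℝ} (ht : t ∈ Set.Ioo 0 T) (hp0 : 0 ≤ p) (hs : 0 < s) :
    HasDerivAt (fun e => T3 T hp hm w (t + e) p i (s + e))
      ((∫ v in t..T, (ff hp hm s * (1 - Ff hp hm (v - t + s)) / (1 - Ff hp hm s) ^ 2) *
          w v p i (v - t + s)) - w t p i s) 0 := by
  set S := survival (hsum hp hm) with hS_def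
  have hk : Continuous fun v => S (v - t + s) * W (v, p, v - t + s) :=
    ((continuous_survival hh).comp (by fun_prop)).mul (hWc.comp (by fun_prop))
  have hdiag : (fun e => T3 T hp hm w (t + e) p i (s + e)) =ᶠ[nhds 0]
      fun e => (S (s + e))⁻¹ * ∫ v in (t + e)..T, S (v - t + s) * W (v, p, v - t + s) := by
    have hte : ∀ᶠ e in nhds (0:ℝ), t + e ∈ Set.Icc 0 T :=
      ((continuous_const_add t).tendsto' 0 t (add_zero t)).eventually (Icc_mem_nhds ht.1 ht.2)
    have hse : ∀ᶠ e in nhds (0:ℝ), 0 ≤ s + e :=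
      ((continuous_const_add s).tendsto' 0 s (add_zero s)).eventually (Ici_mem_nhds hs)
    filter_upwards [hte, hse] with e hte hse
    have hshift : ∀ v, v - (t + e) + (s + e) = v - t + s := fun v => by ring
    rw [T3_eq_survival hW hte hp0 hse]
    simp only [hshift, ← hS_def]
  have hS : S s ≠ 0 := survival_pos.ne'
  rw [integral_ff_mul_sub_eq_survival hW (Set.Ioo_subset_Icc_self ht) hp0 hs.le]
  refine ((hasDerivAt_inv_mul_integral_shift (hasDerivAt_survival hh s) hS hk).congr_of_eventuallyEq
    hdiag).congr_deriv ?_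
  simp only [max_eq_left hs.le, sub_self, zero_add, ← hS_def]
  field_simp
  ring

theorem continuousOn_integral_ff_mul_sub :
    ContinuousOn (fun x : ℝ × ℝ × ℝ =>
        (∫ v in x.1..T,
          (ff hp hm x.2.2 * (1 - Ff hp hm (v - x.1 + x.2.2)) / (1 - Ff hp hm x.2.2) ^ 2) *
            w v x.2.1 i (v - x.1 + x.2.2)) - w x.1 x.2.1 i x.2.2)
      (Set.Icc 0 T ×ˢ Set.Ici 0 ×ˢ Set.Ici 0) := by
  set S := survival (hsum hp hm)
  have hS : Continuous S := continuous_survival hh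
  have hK : Continuous fun x : ℝ × ℝ × ℝ => S x.2.2 * W x := (hS.comp continuous_snd.snd).mul hWc
  have hh' : ContinuousOn (fun x : ℝ × ℝ × ℝ => hsum hp hm x.2.2)
      (Set.Icc 0 T ×ˢ Set.Ici 0 ×ˢ Set.Ici 0) :=
    hh.comp continuous_snd.snd.continuousOn fun x hx => hx.2.2
  refine (((hh'.div (hS.comp continuous_snd.snd).continuousOn fun _ _ => survival_pos.ne').mul
    (continuous_integral_diagonal hK T).continuousOn).sub hWc.continuousOn).congr fun x hx => ?_
  exact integral_ff_mul_sub_eq_survival hW hx.1 hx.2.1 hx.2.2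

end Distribution

theorem stmt8_general (T : ℝ) (hp hm : ℝ → ℝ) (hA : hAssumptions hp hm)
    (w : ℝ → ℝ → ℕ → ℝ → ℝ) (hw : memV T w) :
    ∀ i ∈ stateS,
      (∀ t p s : ℝ, t ∈ Set.Ioo (0:ℝ) T → p ∈ Set.Ioi (0:ℝ) → s ∈ Set.Ioi (0:ℝ) →
        HasDerivAt (fun e : ℝ => T3 T hp hm w (t + e) p i (s + e))
          ((∫ v in t..T, (ff hp hm s * (1 - Ff hp hm (v - t + s)) / (1 - Ff hp hm s) ^ 2) *
              w v p i (v - t + s)) - w t p i s) 0) ∧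
      ContinuousOn (fun x : ℝ × ℝ × ℝ =>
          (∫ v in x.1..T,
            (ff hp hm x.2.2 * (1 - Ff hp hm (v - x.1 + x.2.2)) / (1 - Ff hp hm x.2.2) ^ 2) *
              w v x.2.1 i (v - x.1 + x.2.2)) - w x.1 x.2.1 i x.2.2)
        (Set.Ioo 0 T ×ˢ Set.Ioi 0 ×ˢ Set.Ioi 0) := by
  intro i hi
  have hh : ContinuousOn (hsum hp hm) (Set.Ici 0) := hA.2.1.continuousOn.add hA.2.2.1.continuousOn
  obtain ⟨W, hWc, hW⟩ := (hw.1 i hi).exists_continuous_eqOn_of_isClosed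
    (isClosed_Icc.prod (isClosed_Ici.prod isClosed_Ici))
  refine ⟨fun t p s ht hp0 hs => hasDerivAt_T3_diagonal hW hh hWc ht (le_of_lt hp0) hs, ?_⟩
  exact (continuousOn_integral_ff_mul_sub hW hh hWc).mono
    (Set.prod_mono Set.Ioo_subset_Icc_self
      (Set.prod_mono Set.Ioi_subset_Ici_self Set.Ioi_subset_Ici_self))

/-- `𝒯₃` has, at every point of `D°`, the directional derivative
`D_{t,s}𝒯₃(t,p,i,s) = lim_{ε→0} (𝒯₃(t+ε,p,i,s+ε) − 𝒯₃(t,p,i,s))/ε`, which is continuous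
on `D°` and equals `∫_t^T [f(s)(1−F(v−t+s))/(1−F(s))²] w(v,p,i,v−t+s) dv − w(t,p,i,s)`. -/
theorem stmt8 (T : ℝ) (hT : 0 < T) (hp hm : ℝ → ℝ) (hA : hAssumptions hp hm)
    (w : ℝ → ℝ → ℕ → ℝ → ℝ) (hw : memV T w) :
    ∀ i ∈ stateS,
      (∀ t p s : ℝ, t ∈ Set.Ioo (0:ℝ) T → p ∈ Set.Ioi (0:ℝ) → s ∈ Set.Ioi (0:ℝ) →
        HasDerivAt (fun e : ℝ => T3 T hp hm w (t + e) p i (s + e))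
          ((∫ v in t..T, (ff hp hm s * (1 - Ff hp hm (v - t + s)) / (1 - Ff hp hm s) ^ 2) *
              w v p i (v - t + s)) - w t p i s) 0) ∧
      ContinuousOn (fun x : ℝ × ℝ × ℝ =>
          (∫ v in x.1..T,
            (ff hp hm x.2.2 * (1 - Ff hp hm (v - x.1 + x.2.2)) / (1 - Ff hp hm x.2.2) ^ 2) *
              w v x.2.1 i (v - x.1 + x.2.2)) - w x.1 x.2.1 i x.2.2)
        (Set.Ioo 0 T ×ˢ Set.Ioi 0 ×ˢ Set.Ioi 0) :=
  stmt8_general T hp hm hA w hw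
end
end

section
/- There exists a function π ∈ V which has continuous partial derivatives in t and s on D° and satisfies, for all (t,p,i,s) ∈ D°, the linear partial differential equation ∂π/∂t + ∂π/∂s + Σ_{j≢i} h_{ij}(s)·(π(t, p(1+δα(j)), j, 0) − π(t,p,i,s)) = 0, together with the terminal condition π(T,p,i,s) = p for all (p,i,s) ∈ [0,∞)×𝒳×[0,∞). -/
open MeasureTheory Filter Set Finset intervalIntegral

noncomputable section

/-!
Write `π(t, p, i, s) = p · w_i(t, s)`. Along the characteristics `t - s = const` the equation is a
linear ODE, so with `H = ∫₀ (h₊ + h₋)` the solution is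
`w_i(t, s) = e^{H(s)} (e^{-H(T-t+s)} + ∫_t^T e^{-H(v-t+s)} Σ_{j≢i} h_{ij}(v-t+s)(1 + δα(j)) w_j(v, 0) dv)`.
At `s = 0` this is a linear Volterra system for the boundary values `w_j(·, 0)`, solved by the
Banach fixed point theorem in a weighted sup norm; the formula then defines `w` for all `s`, and
differentiating under the integral gives the equation. The bound on `|w|` uses that `h_ν` is
bounded and `H` is nondecreasing. The `h_ν` are first extended to C¹ functions on `ℝ`.
-/

theorem ContDiffOn.exists_hasDerivAt_extension_Ici {f : ℝ → ℝ} {a : ℝ}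
    (hf : ContDiffOn ℝ 1 f (Ici a)) :
    ∃ g g' : ℝ → ℝ, EqOn g f (Ici a) ∧ Continuous g' ∧ ∀ y, HasDerivAt g (g' y) y := by
  set d := derivWithin f (Ici a)
  set g : ℝ → ℝ := fun y => if y ≤ a then f a + d a * (y - a) else f y
  have hgf : EqOn g f (Ici a) := fun y hy => by
    rcases eq_or_lt_of_le (mem_Ici.mp hy) with rfl | h
    · simp [g]
    · simp [g, not_le.mpr h]
  have hL : ∀ y ∈ Iic a, HasDerivWithinAt g (d (max y a)) (Iic a) y := fun y hy => by
    rw [max_eq_right hy]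
    exact ((((hasDerivAt_id y).sub_const a).const_mul (d a)).const_add (f a)).hasDerivWithinAt.congr
      (fun z hz => if_pos hz) (if_pos hy) |>.congr_deriv (mul_one _)
  have hR : ∀ y ∈ Ici a, HasDerivWithinAt g (d (max y a)) (Ici a) y := fun y hy => by
    rw [max_eq_left hy]
    exact ((hf.differentiableOn one_ne_zero) y hy).hasDerivWithinAt.congr
      (fun z hz => hgf hz) (hgf hy)
  refine ⟨g, fun y => d (max y a), hgf, ?_, fun y => ?_⟩
  · exact (hf.continuousOn_derivWithin (uniqueDiffOn_Ici a) le_rfl).comp_continuous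
      (continuous_id.max continuous_const) fun y => le_max_right y a
  · rcases lt_trichotomy y a with h | rfl | h
    · exact (hL y h.le).hasDerivAt (Iic_mem_nhds h)
    · simpa [Iic_union_Ici] using (hL y self_mem_Iic).union (hR y self_mem_Ici)
    · exact (hR y h.le).hasDerivAt (Ici_mem_nhds h)

section ParametricIntegral

variable {E : Type*} [NormedAddCommGroup E] [NormedSpace ℝ E]

theorem continuous_intervalIntegral_lower {X : Type*} [TopologicalSpace X] {F : X → ℝ → E}
    (hF : Continuous (Function.uncurry F)) {a : X → ℝ} (ha : Continuous a) (b : ℝ) :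
    Continuous fun x => ∫ v in a x..b, F x v := by
  simp_rw [integral_symm b]
  exact (continuous_parametric_intervalIntegral_of_continuous hF ha).neg

theorem hasDerivAt_intervalIntegral_lower_diag [CompleteSpace E] {g : ℝ → ℝ → E}
    (hg : Continuous (Function.uncurry g)) (x₀ : ℝ) :
    HasDerivAt (fun x => ∫ v in x..x₀, g x v) (-g x₀ x₀) x₀ := by
  rw [hasDerivAt_iff_isLittleO, Asymptotics.isLittleO_iff]
  intro c hc
  obtain ⟨d, hd, hball⟩ := Metric.continuousAt_iff.mp (hg.continuousAt (x := (x₀, x₀))) c hc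
  filter_upwards [Metric.ball_mem_nhds x₀ hd] with x hx
  rw [Metric.mem_ball, Real.dist_eq] at hx
  have hint : IntervalIntegrable (g x) volume x x₀ :=
    (hg.comp (Continuous.prodMk_right x)).intervalIntegrable _ _
  have hclose : ∀ v ∈ uIoc x x₀, ‖g x v - g x₀ x₀‖ ≤ c := fun v hv => by
    have hv : |v - x₀| ≤ |x - x₀| := by
      rcases mem_uIcc.mp (uIoc_subset_uIcc hv) with ⟨h₁, h₂⟩ | ⟨h₁, h₂⟩ <;>
        rw [abs_le] <;> constructor <;> linarith [neg_abs_le (x - x₀), le_abs_self (x - x₀)]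
    have hdist : dist (x, v) (x₀, x₀) < d := by
      rw [Prod.dist_eq, Real.dist_eq, Real.dist_eq, max_lt_iff]
      exact ⟨hx, hv.trans_lt hx⟩
    simpa [dist_eq_norm] using (hball hdist).le
  calc ‖(∫ v in x..x₀, g x v) - (∫ v in x₀..x₀, g x₀ v) - (x - x₀) • -g x₀ x₀‖
      = ‖∫ v in x..x₀, (g x v - g x₀ x₀)‖ := by
        rw [integral_same, integral_sub hint intervalIntegrable_const,
          intervalIntegral.integral_const, sub_zero, smul_neg, sub_neg_eq_add, ← neg_sub x₀ x,
          neg_smul, ← sub_eq_add_neg]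
    _ ≤ c * |x₀ - x| := norm_integral_le_of_norm_le_const hclose
    _ = c * ‖x - x₀‖ := by rw [Real.norm_eq_abs, abs_sub_comm]

theorem hasDerivAt_intervalIntegral_comp_add {N N' : ℝ → ℝ → E}
    (hN : Continuous (Function.uncurry N)) (hN' : Continuous (Function.uncurry N'))
    (hd : ∀ v r, HasDerivAt (N v) (N' v r) r) (c d η₀ : ℝ) :
    HasDerivAt (fun η => ∫ v in c..d, N v (v + η)) (∫ v in c..d, N' v (v + η₀)) η₀ := by
  have hshift : ∀ {M : ℝ → ℝ → E}, Continuous (Function.uncurry M) →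
      Continuous fun q : ℝ × ℝ => M q.1 (q.1 + q.2) :=
    fun hM => hM.comp (continuous_fst.prodMk (continuous_fst.add continuous_snd))
  obtain ⟨B, hB⟩ :=
    (isCompact_uIcc.prod (isCompact_closedBall η₀ 1)).exists_bound_of_continuousOn
      (hshift hN').continuousOn
  have hslice : ∀ {M : ℝ → ℝ → E}, Continuous (Function.uncurry M) → ∀ η,
      Continuous fun v => M v (v + η) :=
    fun hM η => (hshift hM).comp (continuous_id.prodMk continuous_const)
  refine (hasDerivAt_integral_of_dominated_loc_of_deriv_le (Metric.ball_mem_nhds η₀ one_pos)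
    (Eventually.of_forall fun η => (hslice hN η).aestronglyMeasurable)
    ((hslice hN η₀).intervalIntegrable _ _) (hslice hN' η₀).aestronglyMeasurable
    (Eventually.of_forall fun v hv η hη => hB (v, η) ⟨uIoc_subset_uIcc hv, ?_⟩)
    intervalIntegrable_const (Eventually.of_forall fun v _ η _ => ?_)).2
  · exact Metric.ball_subset_closedBall hη
  · simpa [Function.comp_def] using (hd v (v + η)).scomp η ((hasDerivAt_id η).const_add v)

variable {N N' : ℝ → ℝ → E}

theorem hasDerivAt_intervalIntegral_shift_param (hN : Continuous (Function.uncurry N))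
    (hN' : Continuous (Function.uncurry N')) (hd : ∀ v r, HasDerivAt (N v) (N' v r) r)
    (t T s : ℝ) :
    HasDerivAt (fun s => ∫ v in t..T, N v (v + (s - t)))
      (∫ v in t..T, N' v (v + (s - t))) s := by
  simpa [Function.comp_def] using
    (hasDerivAt_intervalIntegral_comp_add hN hN' hd t T (s - t)).scomp s
      ((hasDerivAt_id s).sub_const t)

theorem hasDerivAt_intervalIntegral_shift_lower [CompleteSpace E]
    (hN : Continuous (Function.uncurry N)) (hN' : Continuous (Function.uncurry N'))
    (hd : ∀ v r, HasDerivAt (N v) (N' v r) r) (t T s : ℝ) :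
    HasDerivAt (fun t => ∫ v in t..T, N v (v + (s - t)))
      (-N t s - ∫ v in t..T, N' v (v + (s - t))) t := by
  have hcont : Continuous (Function.uncurry fun x v => N v (v + (s - x))) :=
    hN.comp (continuous_snd.prodMk (continuous_snd.add (continuous_const.sub continuous_fst)))
  have hsplit : (fun t' => ∫ v in t'..T, N v (v + (s - t'))) =
      fun t' => (∫ v in t'..t, N v (v + (s - t'))) + ∫ v in t..T, N v (v + (s - t')) :=
    funext fun t' => (integral_add_adjacent_intervals
      ((hcont.comp (Continuous.prodMk_right t')).intervalIntegrable _ _)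
      ((hcont.comp (Continuous.prodMk_right t')).intervalIntegrable _ _)).symm
  rw [hsplit]
  convert (hasDerivAt_intervalIntegral_lower_diag hcont t).add
    ((hasDerivAt_intervalIntegral_comp_add hN hN' hd t T (s - t)).scomp t
      ((hasDerivAt_id t).const_sub s)) using 1
  · rfl
  · simp [sub_eq_add_neg]

end ParametricIntegral

section Volterra

variable {E : Type*} [NormedAddCommGroup E] [NormedSpace ℝ E]

theorem integral_exp_mul_sub {L : ℝ} (hL : L ≠ 0) (a b : ℝ) :
    ∫ v in a..b, Real.exp (L * (b - v)) = (Real.exp (L * (b - a)) - 1) / L := by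
  rw [integral_comp_sub_left (fun u => Real.exp (L * u)), sub_self,
    integral_comp_mul_left (fun u => Real.exp u) hL, integral_exp, mul_zero, Real.exp_zero,
    smul_eq_mul, inv_mul_eq_div]

/-- The operator `g ↦ f + ∫_t^T A t v (g v) dv` conjugated by the weight `e^{L (T - t)}`,
which makes it a contraction in the sup norm once `L > 2 sup ‖A‖`. -/
def weightedVolterra (T L : ℝ) (f : ℝ → E) (A : ℝ → ℝ → E →L[ℝ] E) (g : ℝ → E)
    (t : ℝ) : E :=
  Real.exp (-(L * (T - t))) • (f t + ∫ v in t..T, A t v (Real.exp (L * (T - v)) • g v))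

theorem continuous_weightedVolterra (T L : ℝ) {f : ℝ → E} (hf : Continuous f)
    {A : ℝ → ℝ → E →L[ℝ] E} (hA : Continuous (Function.uncurry A)) {g : ℝ → E}
    (hg : Continuous g) : Continuous (weightedVolterra T L f A g) := by
  refine (by fun_prop : Continuous fun t : ℝ => Real.exp (-(L * (T - t)))).smul
    (hf.add (continuous_intervalIntegral_lower ?_ continuous_id T))
  exact hA.clm_apply ((by fun_prop : Continuous fun q : ℝ × ℝ => Real.exp (L * (T - q.2))).smul
    (hg.comp continuous_snd))

theorem dist_weightedVolterra_le [CompleteSpace E] {T L K D t : ℝ} (hL : 0 < L) (ht : t ≤ T)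
    {f : ℝ → E} {A : ℝ → ℝ → E →L[ℝ] E} (hA : Continuous (Function.uncurry A))
    (hK : ∀ v ∈ Icc t T, ‖A t v‖ ≤ K) {g₁ g₂ : ℝ → E} (hg₁ : Continuous g₁)
    (hg₂ : Continuous g₂) (hD : ∀ v ∈ Icc t T, dist (g₁ v) (g₂ v) ≤ D) :
    dist (weightedVolterra T L f A g₁ t) (weightedVolterra T L f A g₂ t) ≤ K / L * D := by
  have hK0 : 0 ≤ K := (norm_nonneg _).trans (hK T ⟨ht, le_rfl⟩)
  have hD0 : 0 ≤ D := dist_nonneg.trans (hD T ⟨ht, le_rfl⟩)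
  have hint : ∀ {g : ℝ → E}, Continuous g →
      IntervalIntegrable (fun v => A t v (Real.exp (L * (T - v)) • g v)) volume t T := fun hg =>
    ((hA.comp (Continuous.prodMk_right t)).clm_apply
      ((by fun_prop : Continuous fun v : ℝ => Real.exp (L * (T - v))).smul hg)).intervalIntegrable
      _ _
  have hpt : ∀ v ∈ Ioc t T,
      ‖A t v (Real.exp (L * (T - v)) • (g₁ v - g₂ v))‖ ≤
        K * D * Real.exp (L * (T - v)) :=
    fun v hv => by
      refine ((A t v).le_opNorm _).trans ?_
      rw [norm_smul, Real.norm_of_nonneg (Real.exp_pos _).le, ← dist_eq_norm]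
      refine (mul_le_mul (hK v (Ioc_subset_Icc_self hv)) (mul_le_mul_of_nonneg_left
        (hD v (Ioc_subset_Icc_self hv)) (Real.exp_pos _).le) (by positivity) hK0).trans_eq ?_
      ring
  have hexp : Real.exp (-(L * (T - t))) * Real.exp (L * (T - t)) = 1 := by
    rw [← Real.exp_add, neg_add_cancel, Real.exp_zero]
  calc dist (weightedVolterra T L f A g₁ t) (weightedVolterra T L f A g₂ t)
      = Real.exp (-(L * (T - t))) *
          ‖∫ v in t..T, A t v (Real.exp (L * (T - v)) • (g₁ v - g₂ v))‖ := by
        rw [dist_eq_norm, weightedVolterra, weightedVolterra, ← smul_sub, add_sub_add_left_eq_sub,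
          ← integral_sub (hint hg₁) (hint hg₂), norm_smul,
          Real.norm_of_nonneg (Real.exp_pos _).le]
        simp_rw [smul_sub, map_sub]
    _ ≤ Real.exp (-(L * (T - t))) * ∫ v in t..T, K * D * Real.exp (L * (T - v)) := by
        gcongr
        exact norm_integral_le_of_norm_le ht (ae_of_all _ hpt)
          ((by fun_prop : Continuous fun v : ℝ => K * D * Real.exp (L * (T - v)))
            |>.intervalIntegrable _ _)
    _ = K / L * D * (1 - Real.exp (-(L * (T - t)))) := by
        rw [intervalIntegral.integral_const_mul, integral_exp_mul_sub hL.ne']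
        field_simp
        linear_combination K * D * hexp
    _ ≤ K / L * D :=
        mul_le_of_le_one_right (by positivity) (sub_le_self _ (Real.exp_pos _).le)

theorem exists_continuous_volterra_solution [CompleteSpace E] {T : ℝ} (hT : 0 ≤ T)
    {f : ℝ → E} (hf : Continuous f) {A : ℝ → ℝ → E →L[ℝ] E}
    (hA : Continuous (Function.uncurry A)) :
    ∃ x : ℝ → E, Continuous x ∧
      ∀ t ∈ Icc 0 T, x t = f t + ∫ v in t..T, A t v (x v) := by
  obtain ⟨K, hK⟩ := (isCompact_Icc.prod isCompact_Icc).exists_bound_of_continuousOn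
    (s := Icc 0 T ×ˢ Icc 0 T) hA.continuousOn
  have hK0 : 0 ≤ K := (norm_nonneg _).trans (hK (0, 0) ⟨⟨le_rfl, hT⟩, ⟨le_rfl, hT⟩⟩)
  set L := 2 * K + 1
  have hL : 0 < L := by positivity
  let Φ : C(Icc 0 T, E) → C(Icc 0 T, E) := fun g =>
    ⟨fun t => weightedVolterra T L f A (IccExtend hT g) t,
      (continuous_weightedVolterra T L hf hA g.continuous.Icc_extend').comp
        continuous_subtype_val⟩
  have hΦ : ContractingWith (1 / 2) Φ := by
    refine ⟨by rw [← NNReal.coe_lt_coe]; norm_num,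
      LipschitzWith.of_dist_le_mul fun g₁ g₂ => ?_⟩
    rw [ContinuousMap.dist_le (by positivity)]
    intro t
    have hsub : ∀ v ∈ Icc (t : ℝ) T, v ∈ Icc 0 T := fun v hv => ⟨t.2.1.trans hv.1, hv.2⟩
    refine (dist_weightedVolterra_le (D := dist g₁ g₂) hL t.2.2 hA
      (fun v hv => hK (t, v) ⟨t.2, hsub v hv⟩) g₁.continuous.Icc_extend'
      g₂.continuous.Icc_extend' fun v hv => ?_).trans ?_
    · rw [IccExtend_of_mem _ _ (hsub v hv), IccExtend_of_mem _ _ (hsub v hv)]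
      exact ContinuousMap.dist_apply_le_dist _
    · have : K / L ≤ 1 / 2 := by rw [div_le_iff₀ hL]; linarith
      push_cast
      exact mul_le_mul_of_nonneg_right this dist_nonneg
  have : Nonempty C(Icc 0 T, E) := ⟨0⟩
  set g := ContractingWith.fixedPoint Φ hΦ
  have hg : Φ g = g := hΦ.fixedPoint_isFixedPt
  refine ⟨fun t => Real.exp (L * (T - t)) • IccExtend hT g t,
    (by fun_prop : Continuous fun t : ℝ => Real.exp (L * (T - t))).smul g.continuous.Icc_extend',
    fun t ht => ?_⟩
  have hgt : IccExtend hT g t = weightedVolterra T L f A (IccExtend hT g) t := by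
    rw [IccExtend_of_mem _ _ ht]
    conv_lhs => rw [← hg]
    rfl
  dsimp only
  rw [hgt, weightedVolterra, smul_smul, ← Real.exp_add, add_neg_cancel, Real.exp_zero, one_smul]

end Volterra

section Transport

/-- Along the characteristic through `(t, s)` the age at time `v` is `v + (s - t)`; this solves
`∂ₜw + ∂ₛw = H'(s) w - Φ(t, s)` with `w(T, s) = 1`. -/
def transportSol (H : ℝ → ℝ) (Φ : ℝ → ℝ → ℝ) (T t s : ℝ) : ℝ :=
  Real.exp (H s) * (Real.exp (-H (T + (s - t))) +
    ∫ v in t..T, Real.exp (-H (v + (s - t))) * Φ v (v + (s - t)))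

variable {H h : ℝ → ℝ} {Φ Φ' : ℝ → ℝ → ℝ} {T : ℝ}

theorem continuous_transportSol (hH : Continuous H) (hΦ : Continuous (Function.uncurry Φ)) :
    Continuous (Function.uncurry (transportSol H Φ T)) := by
  have hage : Continuous fun p : (ℝ × ℝ) × ℝ => p.2 + (p.1.2 - p.1.1) := by fun_prop
  refine (Real.continuous_exp.comp (hH.comp continuous_snd)).mul
    ((by fun_prop : Continuous fun q : ℝ × ℝ => Real.exp (-H (T + (q.2 - q.1)))).add
      (continuous_intervalIntegral_lower ?_ continuous_fst T))
  exact (Real.continuous_exp.comp (hH.comp hage).neg).mul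
    (hΦ.comp (continuous_snd.prodMk hage))

theorem transportSol_self (s : ℝ) : transportSol H Φ T T s = 1 := by
  simp [transportSol, ← Real.exp_add]

theorem transportSol_zero (hH0 : H 0 = 0) (t : ℝ) :
    transportSol H Φ T t 0 =
      Real.exp (-H (T - t)) + ∫ v in t..T, Real.exp (-H (v - t)) * Φ v (v - t) := by
  simp [transportSol, hH0, ← sub_eq_add_neg]

theorem abs_transportSol_le (hH : MonotoneOn H (Ici 0)) {M : ℝ}
    (hM : ∀ v ∈ Icc 0 T, ∀ r, 0 ≤ r → |Φ v r| ≤ M) {t s : ℝ} (ht : t ∈ Icc 0 T)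
    (hs : 0 ≤ s) :
    |transportSol H Φ T t s| ≤ 1 + T * M := by
  have hdecay : ∀ r, s ≤ r → Real.exp (H s) * Real.exp (-H r) ≤ 1 := fun r hr => by
    rw [← Real.exp_add, Real.exp_le_one_iff, add_neg_le_iff_le_add, zero_add]
    exact hH hs (hs.trans hr) hr
  have hM0 : 0 ≤ M := (abs_nonneg _).trans (hM t ht 0 le_rfl)
  have hint : ∀ v ∈ uIoc t T,
      ‖Real.exp (H s) * (Real.exp (-H (v + (s - t))) * Φ v (v + (s - t)))‖ ≤ M :=
    fun v hv => by
    rw [uIoc_of_le ht.2] at hv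
    have hsv : s ≤ v + (s - t) := by linarith [hv.1]
    rw [Real.norm_eq_abs, ← mul_assoc, abs_mul, abs_of_nonneg (by positivity)]
    exact (mul_le_mul (hdecay _ hsv) (hM v ⟨ht.1.trans hv.1.le, hv.2⟩ _ (hs.trans hsv))
      (abs_nonneg _) zero_le_one).trans_eq (one_mul M)
  calc |transportSol H Φ T t s|
      ≤ |Real.exp (H s) * Real.exp (-H (T + (s - t)))| +
          ‖∫ v in t..T,
            Real.exp (H s) * (Real.exp (-H (v + (s - t))) * Φ v (v + (s - t)))‖ := by
        rw [transportSol, mul_add, ← intervalIntegral.integral_const_mul, ← Real.norm_eq_abs]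
        exact abs_add_le _ _
    _ ≤ 1 + M * |T - t| := by
        gcongr
        · rw [abs_of_nonneg (by positivity)]
          exact hdecay _ (by linarith [ht.2])
        · exact norm_integral_le_of_norm_le_const hint
    _ ≤ 1 + T * M := by
        rw [abs_of_nonneg (sub_nonneg.mpr ht.2), mul_comm]
        gcongr
        linarith [ht.1]

theorem exists_transportSol_partials (hH : ∀ y, HasDerivAt H (h y) y) (hh : Continuous h)
    (hΦ : Continuous (Function.uncurry Φ)) (hΦ' : Continuous (Function.uncurry Φ'))
    (hdΦ : ∀ v r, HasDerivAt (Φ v) (Φ' v r) r) :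
    ∃ wS : ℝ → ℝ → ℝ, Continuous (Function.uncurry wS) ∧ ∀ t s,
      HasDerivAt (transportSol H Φ T t) (wS t s) s ∧
      HasDerivAt (fun t => transportSol H Φ T t s)
        (h s * transportSol H Φ T t s - Φ t s - wS t s) t := by
  have hHc : Continuous H := continuous_iff_continuousAt.mpr fun y => (hH y).continuousAt
  set N : ℝ → ℝ → ℝ := fun v r => Real.exp (-H r) * Φ v r
  set N' : ℝ → ℝ → ℝ := fun v r => Real.exp (-H r) * (Φ' v r - h r * Φ v r)
  have hN : Continuous (Function.uncurry N) :=
    (Real.continuous_exp.comp (hHc.comp continuous_snd).neg).mul hΦ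
  have hN' : Continuous (Function.uncurry N') :=
    (Real.continuous_exp.comp (hHc.comp continuous_snd).neg).mul
      (hΦ'.sub ((hh.comp continuous_snd).mul hΦ))
  have hdN : ∀ v r, HasDerivAt (N v) (N' v r) r := fun v r =>
    ((hH r).neg.exp.mul (hdΦ v r)).congr_deriv (by simp only [N', Pi.neg_apply]; ring)
  set J : ℝ → ℝ → ℝ := fun t s => ∫ v in t..T, N' v (v + (s - t))
  have hJ : Continuous (Function.uncurry J) :=
    continuous_intervalIntegral_lower (F := fun q v => N' v (v + (q.2 - q.1)))
      (hN'.comp (continuous_snd.prodMk (by fun_prop))) continuous_fst T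
  set e : ℝ → ℝ → ℝ := fun t s => h (T + (s - t)) * Real.exp (-H (T + (s - t)))
  refine ⟨fun t s => h s * transportSol H Φ T t s + Real.exp (H s) * (J t s - e t s), ?_,
    fun t s => ⟨?_, ?_⟩⟩
  · exact ((hh.comp continuous_snd).mul (continuous_transportSol hHc hΦ)).add
      ((Real.continuous_exp.comp (hHc.comp continuous_snd)).mul (hJ.sub (by fun_prop)))
  · have hage : HasDerivAt (fun s => T + (s - t)) 1 s :=
      ((hasDerivAt_id s).sub_const t).const_add T
    have := (hH s).exp.mul (((hH _).comp s hage).neg.exp.add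
      (hasDerivAt_intervalIntegral_shift_param hN hN' hdN t T s))
    refine HasDerivAt.congr_deriv (f := transportSol H Φ T t) this ?_
    simp only [transportSol, Function.comp_apply, Pi.neg_apply, Pi.add_apply, e, J]
    ring
  · have hage : HasDerivAt (fun t => T + (s - t)) (-1) t :=
      ((hasDerivAt_id t).const_sub s).const_add T
    have := (((hH _).comp t hage).neg.exp.add
      (hasDerivAt_intervalIntegral_shift_lower hN hN' hdN t T s)).const_mul (Real.exp (H s))
    refine HasDerivAt.congr_deriv (f := fun t => transportSol H Φ T t s) this ?_
    have hexp : Real.exp (H s) * Real.exp (-H s) = 1 := by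
      rw [← Real.exp_add, add_neg_cancel, Real.exp_zero]
    simp only [transportSol, Function.comp_apply, Pi.neg_apply, e, J, N]
    linear_combination -Φ t s * hexp

end Transport

section Switching

variable {hp hm hp' hm' : ℝ → ℝ}

theorem continuous_hijf (hcp : Continuous hp) (hcm : Continuous hm) (i j : ℕ) :
    Continuous (hijf hp hm i j) := by
  unfold hijf; split_ifs <;> assumption

theorem hasDerivAt_hijf {y : ℝ} (hdp : HasDerivAt hp (hp' y) y) (hdm : HasDerivAt hm (hm' y) y)
    (i j : ℕ) : HasDerivAt (hijf hp hm i j) (hijf hp' hm' i j y) y := by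
  unfold hijf; split_ifs <;> assumption

theorem hijf_eq_of_eqOn {f g : ℝ → ℝ} {s : Set ℝ} (hpf : EqOn hp f s) (hmg : EqOn hm g s)
    (i j : ℕ) {y : ℝ} (hy : y ∈ s) : hijf hp hm i j y = hijf f g i j y := by
  unfold hijf; split_ifs
  exacts [hpf hy, hmg hy]

theorem abs_hijf_le {c y : ℝ} (hp0 : 0 ≤ hp y) (hm0 : 0 ≤ hm y) (hpc : hp y ≤ c)
    (hmc : hm y ≤ c) (i j : ℕ) : |hijf hp hm i j y| ≤ c := by
  unfold hijf; split_ifs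
  exacts [(abs_of_nonneg hp0).trans_le hpc, (abs_of_nonneg hm0).trans_le hmc]

theorem conjS_subset_stateS (i : ℕ) : conjS i ⊆ stateS := by
  unfold conjS; split_ifs <;> decide

theorem card_conjS (i : ℕ) : (conjS i).card = 2 := by
  unfold conjS; split_ifs <;> rfl

theorem sum_hijf_conjS {i : ℕ} (hi : i ∈ stateS) (y : ℝ) :
    ∑ j ∈ conjS i, hijf hp hm i j y = hsum hp hm y := by
  simp only [stateS, Finset.mem_insert, Finset.mem_singleton] at hi
  rcases hi with rfl | rfl | rfl | rfl <;> simp [conjS, hijf, hsum, Nat.even_iff, add_comm]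

theorem abs_alphaR (j : ℕ) : |alphaR j| = 1 := by simp [alphaR]

/-- The regime states `1, …, 4` are the indices of `Fin 5` (index `0` is unused), and `y j` reads
the state `j : ℕ` as `Fin.ofNat 5 j`. -/
def switchSource (hp hm : ℝ → ℝ) (δ : ℝ) (i : ℕ) (r : ℝ) (y : Fin 5 → ℝ) : ℝ :=
  ∑ j ∈ conjS i, hijf hp hm i j r * ((1 + δ * alphaR j) * y (Fin.ofNat 5 j))

def cumHazard (hp hm : ℝ → ℝ) (y : ℝ) : ℝ := ∫ v in (0 : ℝ)..y, hsum hp hm v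

def switchKernel (hp hm : ℝ → ℝ) (δ t v : ℝ) : (Fin 5 → ℝ) →L[ℝ] (Fin 5 → ℝ) :=
  Real.exp (-cumHazard hp hm (v - t)) • ContinuousLinearMap.pi fun i : Fin 5 =>
    ∑ j ∈ conjS i,
      (hijf hp hm i j (v - t) * (1 + δ * alphaR j)) • ContinuousLinearMap.proj (Fin.ofNat 5 j)

variable {δ : ℝ}

theorem switchKernel_apply (t v : ℝ) (y : Fin 5 → ℝ) (i : Fin 5) :
    switchKernel hp hm δ t v y i =
      Real.exp (-cumHazard hp hm (v - t)) * switchSource hp hm δ i (v - t) y := by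
  simp [switchKernel, switchSource, mul_assoc]

theorem hasDerivAt_cumHazard (hcp : Continuous hp) (hcm : Continuous hm) (y : ℝ) :
    HasDerivAt (cumHazard hp hm) (hsum hp hm y) y :=
  integral_hasDerivAt_right ((hcp.add hcm).intervalIntegrable _ _)
    ((hcp.add hcm).stronglyMeasurableAtFilter _ _) (hcp.add hcm).continuousAt

theorem monotoneOn_cumHazard (hcp : Continuous hp) (hcm : Continuous hm)
    (hnn : ∀ y, 0 ≤ y → 0 ≤ hp y ∧ 0 ≤ hm y) : MonotoneOn (cumHazard hp hm) (Ici 0) :=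
  monotoneOn_of_hasDerivWithinAt_nonneg (convex_Ici 0)
    (fun y _ => (hasDerivAt_cumHazard hcp hcm y).continuousAt.continuousWithinAt)
    (fun y _ => (hasDerivAt_cumHazard hcp hcm y).hasDerivWithinAt)
    fun y hy => by
      rw [interior_Ici] at hy
      exact add_nonneg (hnn y (le_of_lt hy)).1 (hnn y (le_of_lt hy)).2

theorem continuous_switchKernel (hcp : Continuous hp) (hcm : Continuous hm) :
    Continuous (Function.uncurry (switchKernel hp hm δ)) := by
  have hHc : Continuous (cumHazard hp hm) := continuous_iff_continuousAt.mpr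
    fun y => (hasDerivAt_cumHazard hcp hcm y).continuousAt
  have hage : Continuous fun q : ℝ × ℝ => q.2 - q.1 := by fun_prop
  refine (Real.continuous_exp.comp (hHc.comp hage).neg).smul
    ((ContinuousLinearMap.piEquivL ℝ _ _).continuous.comp (continuous_pi fun i => ?_))
  exact continuous_finsetSum _ fun j _ =>
    (((continuous_hijf hcp hcm i j).comp hage).mul continuous_const).smul continuous_const

theorem continuous_switchSource (hcp : Continuous hp) (hcm : Continuous hm)
    {x : ℝ → Fin 5 → ℝ} (hx : Continuous x) (i : ℕ) :
    Continuous (Function.uncurry fun v r => switchSource hp hm δ i r (x v)) :=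
  continuous_finsetSum _ fun j _ => ((continuous_hijf hcp hcm i j).comp continuous_snd).mul
    (continuous_const.mul ((continuous_apply _).comp (hx.comp continuous_fst)))

theorem hasDerivAt_switchSource (hdp : ∀ y, HasDerivAt hp (hp' y) y)
    (hdm : ∀ y, HasDerivAt hm (hm' y) y) (i : ℕ) (r : ℝ) (y : Fin 5 → ℝ) :
    HasDerivAt (fun r => switchSource hp hm δ i r y) (switchSource hp' hm' δ i r y) r := by
  simpa [switchSource] using HasDerivAt.fun_sum fun j _ =>
    (hasDerivAt_hijf (hdp r) (hdm r) i j).mul_const ((1 + δ * alphaR j) * y (Fin.ofNat 5 j))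

theorem abs_switchSource_le {c r : ℝ} (hp0 : 0 ≤ hp r) (hm0 : 0 ≤ hm r) (hpc : hp r ≤ c)
    (hmc : hm r ≤ c) (i : ℕ) (y : Fin 5 → ℝ) :
    |switchSource hp hm δ i r y| ≤ 2 * (c * ((1 + |δ|) * ‖y‖)) := by
  refine (Finset.abs_sum_le_sum_abs _ _).trans <|
    (Finset.sum_le_card_nsmul _ _ _ fun j _ => ?_).trans_eq
      (by rw [card_conjS, nsmul_eq_mul, Nat.cast_ofNat])
  have hα : |1 + δ * alphaR j| ≤ 1 + |δ| := (abs_add_le _ _).trans_eq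
    (by rw [abs_one, abs_mul, abs_alphaR, mul_one])
  rw [abs_mul, abs_mul]
  gcongr
  · exact (abs_nonneg _).trans (abs_hijf_le hp0 hm0 hpc hmc i j)
  · exact abs_hijf_le hp0 hm0 hpc hmc i j
  · exact norm_le_pi_norm y _

variable {T : ℝ}

theorem transportSol_switchSource_zero (hcp : Continuous hp) (hcm : Continuous hm)
    {x : ℝ → Fin 5 → ℝ} (hx : Continuous x)
    (hxV : ∀ t ∈ Icc 0 T, x t = (fun _ => Real.exp (-cumHazard hp hm (T - t))) +
      ∫ v in t..T, switchKernel hp hm δ t v (x v))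
    {i : ℕ} (hi : i ∈ stateS) {t : ℝ} (ht : t ∈ Icc 0 T) :
    transportSol (cumHazard hp hm) (fun v r => switchSource hp hm δ i r (x v)) T t 0 =
      x t (Fin.ofNat 5 i) := by
  have hi5 : (Fin.ofNat 5 i : ℕ) = i := by
    simp only [stateS, Finset.mem_insert, Finset.mem_singleton] at hi
    rcases hi with rfl | rfl | rfl | rfl <;> rfl
  have hint : IntervalIntegrable (fun v => switchKernel hp hm δ t v (x v)) volume t T :=
    (((continuous_switchKernel hcp hcm).comp (Continuous.prodMk_right t)).clm_apply
      hx).intervalIntegrable _ _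
  have hcomp := (ContinuousLinearMap.proj (R := ℝ) (φ := fun _ : Fin 5 => ℝ)
    (Fin.ofNat 5 i)).intervalIntegral_comp_comm hint
  simp only [ContinuousLinearMap.proj_apply, switchKernel_apply, hi5] at hcomp
  rw [transportSol_zero (by simp [cumHazard]), hxV t ht, Pi.add_apply, ← hcomp]

theorem exists_switching_solution (hT : 0 ≤ T) (hdp : ∀ y, HasDerivAt hp (hp' y) y)
    (hdm : ∀ y, HasDerivAt hm (hm' y) y) (hcp' : Continuous hp') (hcm' : Continuous hm')
    {c : ℝ} (hnn : ∀ y, 0 ≤ y → 0 ≤ hp y ∧ 0 ≤ hm y)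
    (hle : ∀ y, 0 ≤ y → hp y ≤ c ∧ hm y ≤ c) :
    ∃ w wT wS : ℕ → ℝ → ℝ → ℝ,
      (∀ i, Continuous (Function.uncurry (w i)) ∧ Continuous (Function.uncurry (wT i)) ∧
        Continuous (Function.uncurry (wS i))) ∧
      (∃ C, ∀ i ∈ stateS, ∀ t ∈ Icc 0 T, ∀ s, 0 ≤ s → |w i t s| ≤ C) ∧
      (∀ i s, w i T s = 1) ∧
      ∀ i ∈ stateS, ∀ t ∈ Icc 0 T, ∀ s,
        HasDerivAt (fun t => w i t s) (wT i t s) t ∧ HasDerivAt (w i t) (wS i t s) s ∧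
        wT i t s + wS i t s +
          ∑ j ∈ conjS i, hijf hp hm i j s * ((1 + δ * alphaR j) * w j t 0 - w i t s) = 0 := by
  have hcp : Continuous hp := continuous_iff_continuousAt.mpr fun y => (hdp y).continuousAt
  have hcm : Continuous hm := continuous_iff_continuousAt.mpr fun y => (hdm y).continuousAt
  have hH := hasDerivAt_cumHazard hcp hcm
  have hHc : Continuous (cumHazard hp hm) :=
    continuous_iff_continuousAt.mpr fun y => (hH y).continuousAt
  obtain ⟨x, hx, hxV⟩ := exists_continuous_volterra_solution hT
    (f := fun t _ => Real.exp (-cumHazard hp hm (T - t))) (by fun_prop)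
    (continuous_switchKernel (δ := δ) hcp hcm)
  obtain ⟨CX, hCX⟩ := isCompact_Icc.exists_bound_of_continuousOn (s := Icc 0 T) hx.continuousOn
  set Φ : ℕ → ℝ → ℝ → ℝ := fun i v r => switchSource hp hm δ i r (x v)
  have hΦ := continuous_switchSource (δ := δ) hcp hcm hx
  choose wS hwSc hwS using fun i =>
    exists_transportSol_partials (T := T) hH (hcp.add hcm) (hΦ i)
      (continuous_switchSource hcp' hcm' hx i) fun v r => hasDerivAt_switchSource hdp hdm i r (x v)
  refine ⟨fun i => transportSol (cumHazard hp hm) (Φ i) T,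
    fun i t s => hsum hp hm s * transportSol (cumHazard hp hm) (Φ i) T t s - Φ i t s - wS i t s,
    wS, fun i => ⟨continuous_transportSol hHc (hΦ i), ?_, hwSc i⟩,
    ⟨1 + T * (2 * (c * ((1 + |δ|) * CX))), fun i _ t ht s hs => ?_⟩,
    fun i s => transportSol_self s, fun i hi t ht s => ⟨(hwS i t s).2, (hwS i t s).1, ?_⟩⟩
  · exact ((((hcp.add hcm).comp continuous_snd).mul (continuous_transportSol hHc (hΦ i))).sub
      (hΦ i)).sub (hwSc i)
  · refine abs_transportSol_le (monotoneOn_cumHazard hcp hcm hnn) (fun v hv r hr => ?_) ht hs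
    exact (abs_switchSource_le (hnn r hr).1 (hnn r hr).2 (hle r hr).1 (hle r hr).2 i _).trans
      (by gcongr; exacts [(hle 0 le_rfl).1.trans' (hnn 0 le_rfl).1, hCX v hv])
  · have hw0 : ∀ j ∈ conjS i,
        transportSol (cumHazard hp hm) (Φ j) T t 0 = x t (Fin.ofNat 5 j) :=
      fun j hj => transportSol_switchSource_zero hcp hcm hx hxV (conjS_subset_stateS i hj) ht
    simp only [mul_sub, Finset.sum_sub_distrib, ← Finset.sum_mul, sum_hijf_conjS hi]
    rw [Finset.sum_congr rfl fun j hj => by rw [hw0 j hj]]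
    simp only [Φ, switchSource]
    ring

end Switching

theorem continuous_mul_uncurry {u : ℝ → ℝ → ℝ} (hu : Continuous (Function.uncurry u)) :
    Continuous fun x : ℝ × ℝ × ℝ => x.2.1 * u x.1 x.2.2 :=
  (continuous_fst.comp continuous_snd).mul
    (hu.comp (continuous_fst.prodMk (continuous_snd.comp continuous_snd)))

theorem stmt12_general (T δ : ℝ) (hT : 0 < T) (hp hm : ℝ → ℝ)
    (hA : hAssumptions hp hm) :
    ∃ pStar pT pS : ℝ → ℝ → ℕ → ℝ → ℝ, memV T pStar ∧
      (∀ i ∈ stateS, ∀ t p s : ℝ,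
        t ∈ Set.Ioo (0:ℝ) T → p ∈ Set.Ioi (0:ℝ) → s ∈ Set.Ioi (0:ℝ) →
          HasDerivAt (fun t' => pStar t' p i s) (pT t p i s) t ∧
          HasDerivAt (fun s' => pStar t p i s') (pS t p i s) s ∧
          pT t p i s + pS t p i s +
            (∑ j ∈ conjS i, hijf hp hm i j s *
              (pStar t (p * (1 + δ * alphaR j)) j 0 - pStar t p i s)) = 0) ∧
      (∀ i ∈ stateS,
        ContinuousOn (fun x : ℝ × ℝ × ℝ => pT x.1 x.2.1 i x.2.2)
          (Set.Ioo 0 T ×ˢ Set.Ioi 0 ×ˢ Set.Ioi 0) ∧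
        ContinuousOn (fun x : ℝ × ℝ × ℝ => pS x.1 x.2.1 i x.2.2)
          (Set.Ioo 0 T ×ˢ Set.Ioi 0 ×ˢ Set.Ioi 0)) ∧
      (∀ p s : ℝ, p ∈ Set.Ici (0:ℝ) → s ∈ Set.Ici (0:ℝ) → ∀ i ∈ stateS,
        pStar T p i s = p) := by
  obtain ⟨hnn, hCp, hCm, ⟨c, hc⟩, -, -, -⟩ := hA
  obtain ⟨hpE, hp', hpE_eq, hcp', hdp⟩ := hCp.exists_hasDerivAt_extension_Ici
  obtain ⟨hmE, hm', hmE_eq, hcm', hdm⟩ := hCm.exists_hasDerivAt_extension_Ici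
  obtain ⟨w, wT, wS, hcont, ⟨C, hC⟩, hterm, hpde⟩ :=
    exists_switching_solution (δ := δ) hT.le hdp hdm hcp' hcm' (c := c)
      (fun y hy => by rw [hpE_eq hy, hmE_eq hy]; exact hnn y hy)
      (fun y hy => by rw [hpE_eq hy, hmE_eq hy]; exact hc y hy)
  refine ⟨fun t p i s => p * w i t s, fun t p i s => p * wT i t s, fun t p i s => p * wS i t s,
    ⟨fun i _ => (continuous_mul_uncurry (hcont i).1).continuousOn, C,
      fun t p s ht hp0 hs i hi => ?_⟩, fun i hi t p s ht _ hs => ?_,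
    fun i _ => ⟨(continuous_mul_uncurry (hcont i).2.1).continuousOn,
      (continuous_mul_uncurry (hcont i).2.2).continuousOn⟩, fun p s _ _ i _ => by simp [hterm]⟩
  · have hwC := hC i hi t ht s hs
    rw [div_le_iff₀ (by linarith [mem_Ici.mp hp0]), abs_mul, abs_of_nonneg hp0]
    nlinarith [abs_nonneg (w i t s), mem_Ici.mp hp0]
  · obtain ⟨hdt, hds, hsum⟩ := hpde i hi t (Ioo_subset_Icc_self ht) s
    refine ⟨hdt.const_mul p, hds.const_mul p, ?_⟩
    have hjumps :
        ∑ j ∈ conjS i, hijf hp hm i j s * (p * (1 + δ * alphaR j) * w j t 0 - p * w i t s) =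
        p * ∑ j ∈ conjS i, hijf hpE hmE i j s * ((1 + δ * alphaR j) * w j t 0 - w i t s) := by
      rw [Finset.mul_sum]
      refine Finset.sum_congr rfl fun j _ => ?_
      rw [hijf_eq_of_eqOn hpE_eq.symm hmE_eq.symm i j (mem_Ici.mpr (le_of_lt hs))]
      ring
    linear_combination p * hsum + hjumps

/-- There exists `π ∈ V` with continuous partial derivatives in `t` and `s` on `D°`
satisfying `∂π/∂t + ∂π/∂s + Σ_{j≢i} h_{ij}(s)(π(t,p(1+δα(j)),j,0) − π(t,p,i,s)) = 0`
on `D°` and `π(T,p,i,s) = p`. -/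
theorem stmt12 (T δ : ℝ) (hT : 0 < T) (hδ : 0 < δ) (hp hm : ℝ → ℝ)
    (hA : hAssumptions hp hm) :
    ∃ pStar pT pS : ℝ → ℝ → ℕ → ℝ → ℝ, memV T pStar ∧
      (∀ i ∈ stateS, ∀ t p s : ℝ,
        t ∈ Set.Ioo (0:ℝ) T → p ∈ Set.Ioi (0:ℝ) → s ∈ Set.Ioi (0:ℝ) →
          HasDerivAt (fun t' => pStar t' p i s) (pT t p i s) t ∧
          HasDerivAt (fun s' => pStar t p i s') (pS t p i s) s ∧
          pT t p i s + pS t p i s +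
            (∑ j ∈ conjS i, hijf hp hm i j s *
              (pStar t (p * (1 + δ * alphaR j)) j 0 - pStar t p i s)) = 0) ∧
      (∀ i ∈ stateS,
        ContinuousOn (fun x : ℝ × ℝ × ℝ => pT x.1 x.2.1 i x.2.2)
          (Set.Ioo 0 T ×ˢ Set.Ioi 0 ×ˢ Set.Ioi 0) ∧
        ContinuousOn (fun x : ℝ × ℝ × ℝ => pS x.1 x.2.1 i x.2.2)
          (Set.Ioo 0 T ×ˢ Set.Ioi 0 ×ˢ Set.Ioi 0)) ∧
      (∀ p s : ℝ, p ∈ Set.Ici (0:ℝ) → s ∈ Set.Ici (0:ℝ) → ∀ i ∈ stateS,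
        pStar T p i s = p) :=
  stmt12_general T δ hT hp hm hA
end
end

section
/- Suppose π ∈ V has continuous partial derivatives in t and s on D° and solves ∂π/∂t + ∂π/∂s + Σ_{j≢i} h_{ij}(s)(π(t,p(1+δα(j)),j,0) − π(t,p,i,s)) = 0 with π(T,p,i,s) = p, and suppose u ∈ V possesses a continuous directional derivative D_{t,s}u on D° and solves D_{t,s}u(t,p,i,s) + Σ_{j≢i} h_{ij}(s)(u(t,p(1+δα(j)),j,0) − u(t,p,i,s)) + Σ_{j≢i} max{m_j(t,p,i,s),0} = 0 with u(T,p,i,s) = 0. Define J⁰(t,p,i,s,x,y) := x + y·π(t,p,i,s) + u(t,p,i,s) for (t,p,i,s) ∈ D, x ∈ ℝ, y ∈ ℤ. Then for every (t,p,i,s) ∈ D° and all x ∈ ℝ, y ∈ ℤ: max over l = (l⁺,l⁻) ∈ {0,1}² of 𝒜^l J⁰(t,p,i,s,x,y) equals 0, the maximum is attained at the control l* with l*^{ᾱ(j)} = 1 if m_j(t,p,i,s) > 0 and l*^{ᾱ(j)} = 0 otherwise (for each j ≢ i), and J⁰(T,p,i,s,x,y) = x + y·p. -/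
open MeasureTheory Filter Set Finset intervalIntegral

noncomputable section

/-- `λ_{ᾱ(j)}` : `λ₊` if `j` is even, `λ₋` if `j` is odd. -/
def lamBar (lp lm : ℝ → ℝ) (j : ℕ) : ℝ → ℝ := if Even j then lp else lm

/-- `ϑ_{ᾱ(j)}` : `ϑ₊` if `j` is even, `ϑ₋` if `j` is odd. -/
def thBar (tp tm : ℕ → ℝ) (j : ℕ) : ℕ → ℝ := if Even j then tp else tm

/-- `α(j) = (−1)^j` as an integer. -/
def alphaZ (j : ℕ) : ℤ := (-1 : ℤ) ^ j

/-- The control space `{0,1} × {0,1}` (components `(l⁺, l⁻)`). -/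
def Lset : Set (ℤ × ℤ) := ({0, 1} : Set ℤ) ×ˢ ({0, 1} : Set ℤ)

/-- `l^{ᾱ(j)}` : the `+`–component if `j` is even, the `−`–component if `j` is odd. -/
def lcomp (l : ℤ × ℤ) (j : ℕ) : ℤ := if Even j then l.1 else l.2

/-- `m_j(t,p,i,s)`. -/
def mjf (δ ε : ℝ) (K : ℕ) (hp hm lp lm : ℝ → ℝ) (tp tm : ℕ → ℝ)
    (π : ℝ → ℝ → ℕ → ℝ → ℝ) (i j : ℕ) (t p s : ℝ) : ℝ :=
  lamBar lp lm j s * (∑ k ∈ Finset.range (K + 1), (k : ℝ) * thBar tp tm j k) *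
      (alphaR j * p - alphaR j * π t p i s + δ * p - ε) +
    hijf hp hm i j s * (K : ℝ) *
      (alphaR j * p - alphaR j * π t (p * (1 + δ * alphaR j)) j 0 + δ * p - ε)

/-- The operator `𝒜^l Ĵ` at a point of `D° × ℝ × ℤ`, where `DtsVal` stands for the
directional derivative `D_{t,s}Ĵ` at that point. -/
def Aop (δ ε : ℝ) (K : ℕ) (hp hm lp lm : ℝ → ℝ) (tp tm : ℕ → ℝ)
    (J : ℝ → ℝ → ℕ → ℝ → ℝ → ℤ → ℝ) (DtsVal : ℝ)
    (t p : ℝ) (i : ℕ) (s x : ℝ) (y : ℤ) (l : ℤ × ℤ) : ℝ :=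
  DtsVal + ∑ j ∈ conjS i,
    (lamBar lp lm j s * ∑ k ∈ Finset.range (K + 1), thBar tp tm j k *
        (J t p i s
            (x + alphaR j * (lcomp l j : ℝ) * (k : ℝ) * (p * (1 + δ * alphaR j) - alphaR j * ε))
            (y - alphaZ j * lcomp l j * (k : ℤ)) -
          J t p i s x y) +
      hijf hp hm i j s *
        (J t (p * (1 + δ * alphaR j)) j 0
            (x + alphaR j * (lcomp l j : ℝ) * (K : ℝ) * (p * (1 + δ * alphaR j) - alphaR j * ε))
            (y - alphaZ j * lcomp l j * (K : ℤ)) -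
          J t p i s x y))

/-- `J⁰(t,p,i,s,x,y) = x + y·π(t,p,i,s) + u(t,p,i,s)`. -/
def J0 (π u : ℝ → ℝ → ℕ → ℝ → ℝ) (t p : ℝ) (i : ℕ) (s x : ℝ) (y : ℤ) : ℝ :=
  x + (y : ℝ) * π t p i s + u t p i s

/-!
Since `J⁰ = x + y π + u` is affine in the cash `x` and the inventory `y`, every jump of `J⁰`
splits into `y` times the jump of `π`, the jump of `u`, and `l^{ᾱ(j)}` times a term which,
because `α(j)² = 1`, is exactly the corresponding summand of `m_j`. Adding `y` times the
equation for `π` and the equation for `u` therefore collapses `𝒜^l J⁰` to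
`Σ_{j ≢ i} (l^{ᾱ(j)} m_j − max(m_j, 0))`, which is `≤ 0` for `l ∈ {0,1}²` and vanishes for the
bang-bang control `l^{ᾱ(j)} = 1_{m_j > 0}`. The directional derivative of `π` comes from its
continuous partial derivatives.
-/

open Topology Function

theorem hasDerivAt_diag_of_partials {f fT fS : ℝ → ℝ → ℝ} {t s : ℝ}
    (hT : ∀ᶠ q in 𝓝 (t, s), HasDerivAt (f · q.2) (fT q.1 q.2) q.1)
    (hS : ∀ᶠ q in 𝓝 (t, s), HasDerivAt (f q.1 ·) (fS q.1 q.2) q.2)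
    (cT : ContinuousAt (uncurry fT) (t, s)) (cS : ContinuousAt (uncurry fS) (t, s)) :
    HasDerivAt (fun e => f (t + e) (s + e)) (fT t s + fS t s) 0 := by
  have hf := hasStrictFDerivAt_uncurry_coprod (f := f)
    (f₁ := fun a b => (1 : ℝ →L[ℝ] ℝ).smulRight (fT a b))
    (f₂ := fun a b => (1 : ℝ →L[ℝ] ℝ).smulRight (fS a b))
    (hT.mono fun q hq => hq.hasFDerivAt) (hS.mono fun q hq => hq.hasFDerivAt)
    (ContinuousLinearMap.toSpanSingletonCLE.continuous.continuousAt.comp cT)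
    (ContinuousLinearMap.toSpanSingletonCLE.continuous.continuousAt.comp cS)
  have hdiag : HasDerivAt (fun e : ℝ => (t + e, s + e)) (1, 1) 0 :=
    ((hasDerivAt_id 0).const_add t).prodMk ((hasDerivAt_id 0).const_add s)
  simpa [comp_def, HasUncurry.uncurry] using
    hf.hasFDerivAt.comp_hasDerivAt_of_eq 0 hdiag (by simp)

theorem hasDerivAt_diag_of_continuousOn_partials {φ φT φS : ℝ → ℝ → ℕ → ℝ → ℝ} {T t p s : ℝ}
    {i : ℕ}
    (hderiv : ∀ t p s : ℝ, t ∈ Set.Ioo (0:ℝ) T → p ∈ Set.Ioi (0:ℝ) → s ∈ Set.Ioi (0:ℝ) →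
      HasDerivAt (fun t' => φ t' p i s) (φT t p i s) t ∧
      HasDerivAt (fun s' => φ t p i s') (φS t p i s) s)
    (hcont : ContinuousOn (fun x : ℝ × ℝ × ℝ => φT x.1 x.2.1 i x.2.2)
        (Set.Ioo 0 T ×ˢ Set.Ioi 0 ×ˢ Set.Ioi 0) ∧
      ContinuousOn (fun x : ℝ × ℝ × ℝ => φS x.1 x.2.1 i x.2.2)
        (Set.Ioo 0 T ×ˢ Set.Ioi 0 ×ˢ Set.Ioi 0))
    (ht : t ∈ Set.Ioo (0:ℝ) T) (hp : p ∈ Set.Ioi (0:ℝ)) (hs : s ∈ Set.Ioi (0:ℝ)) :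
    HasDerivAt (fun e => φ (t + e) p i (s + e)) (φT t p i s + φS t p i s) 0 := by
  have hU : Set.Ioo 0 T ×ˢ Set.Ioi 0 ∈ 𝓝 (t, s) :=
    (isOpen_Ioo.prod isOpen_Ioi).mem_nhds ⟨ht, hs⟩
  have hV : Set.Ioo 0 T ×ˢ Set.Ioi 0 ×ˢ Set.Ioi 0 ∈ 𝓝 (t, p, s) :=
    (isOpen_Ioo.prod (isOpen_Ioi.prod isOpen_Ioi)).mem_nhds ⟨ht, hp, hs⟩
  have hslice : Continuous fun q : ℝ × ℝ => (q.1, p, q.2) := by fun_prop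
  exact hasDerivAt_diag_of_partials (f := fun a b => φ a p i b)
    (fT := fun a b => φT a p i b) (fS := fun a b => φS a p i b)
    (Filter.mem_of_superset hU fun q hq => (hderiv q.1 p q.2 hq.1 hp hq.2).1)
    (Filter.mem_of_superset hU fun q hq => (hderiv q.1 p q.2 hq.1 hp hq.2).2)
    ((hcont.1.continuousAt hV).comp_of_eq hslice.continuousAt rfl)
    ((hcont.2.continuousAt hV).comp_of_eq hslice.continuousAt rfl)

section Generator

variable {δ ε : ℝ} {K : ℕ} {hp hm lp lm : ℝ → ℝ} {tp tm : ℕ → ℝ} {π u : ℝ → ℝ → ℕ → ℝ → ℝ}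

theorem hasDerivAt_J0_diag {a b t p s x : ℝ} {y : ℤ} {i : ℕ}
    (hπ : HasDerivAt (fun e => π (t + e) p i (s + e)) a 0)
    (hu : HasDerivAt (fun e => u (t + e) p i (s + e)) b 0) :
    HasDerivAt (fun e => J0 π u (t + e) p i (s + e) x y) (y * a + b) 0 :=
  ((hπ.const_mul (y : ℝ)).const_add x).add hu

theorem alphaR_mul_self (j : ℕ) : alphaR j * alphaR j = 1 := by
  rw [alphaR, ← mul_pow]; norm_num

theorem J0_jump (t p p' s s' x : ℝ) (y : ℤ) (i i' j : ℕ) (c : ℤ) (n : ℕ) :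
    J0 π u t p' i' s'
        (x + alphaR j * c * n * (p * (1 + δ * alphaR j) - alphaR j * ε))
        (y - alphaZ j * c * n) - J0 π u t p i s x y =
      c * n * (alphaR j * p - alphaR j * π t p' i' s' + δ * p - ε) +
        y * (π t p' i' s' - π t p i s) + (u t p' i' s' - u t p i s) := by
  have hZ : ((alphaZ j : ℤ) : ℝ) = alphaR j := by simp [alphaZ, alphaR]
  simp only [J0]
  push_cast
  rw [hZ]
  linear_combination (c * n * (δ * p - ε) : ℝ) * alphaR_mul_self j

theorem Aop_J0 (L t p s x : ℝ) (y : ℤ) (i : ℕ) (l : ℤ × ℤ) :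
    Aop δ ε K hp hm lp lm tp tm (J0 π u) L t p i s x y l =
      L + (y : ℝ) * ∑ j ∈ conjS i, hijf hp hm i j s *
          (π t (p * (1 + δ * alphaR j)) j 0 - π t p i s) +
        ∑ j ∈ conjS i, hijf hp hm i j s * (u t (p * (1 + δ * alphaR j)) j 0 - u t p i s) +
        ∑ j ∈ conjS i, (lcomp l j : ℝ) * mjf δ ε K hp hm lp lm tp tm π i j t p s := by
  simp only [Aop, J0_jump, sub_self, mul_zero, add_zero, mjf]
  rw [Finset.mul_sum, add_assoc, add_assoc, ← Finset.sum_add_distrib, ← Finset.sum_add_distrib]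
  congr 1
  refine Finset.sum_congr rfl fun j _ => ?_
  have hk : ∑ k ∈ Finset.range (K + 1), thBar tp tm j k *
        ((lcomp l j : ℝ) * k * (alphaR j * p - alphaR j * π t p i s + δ * p - ε)) =
      lcomp l j * (∑ k ∈ Finset.range (K + 1), (k : ℝ) * thBar tp tm j k) *
        (alphaR j * p - alphaR j * π t p i s + δ * p - ε) := by
    rw [Finset.mul_sum, Finset.sum_mul]
    exact Finset.sum_congr rfl fun k _ => by ring
  rw [hk]
  ring

theorem Aop_J0_eq_sum_sub_max {a b t p s x : ℝ} {y : ℤ} {i : ℕ} (l : ℤ × ℤ)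
    (hπ : a + ∑ j ∈ conjS i, hijf hp hm i j s *
      (π t (p * (1 + δ * alphaR j)) j 0 - π t p i s) = 0)
    (hu : b + ∑ j ∈ conjS i, hijf hp hm i j s * (u t (p * (1 + δ * alphaR j)) j 0 - u t p i s) +
      ∑ j ∈ conjS i, max (mjf δ ε K hp hm lp lm tp tm π i j t p s) 0 = 0) :
    Aop δ ε K hp hm lp lm tp tm (J0 π u) (y * a + b) t p i s x y l =
      ∑ j ∈ conjS i, ((lcomp l j : ℝ) * mjf δ ε K hp hm lp lm tp tm π i j t p s -
        max (mjf δ ε K hp hm lp lm tp tm π i j t p s) 0) := by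
  rw [Aop_J0, Finset.sum_sub_distrib]
  linear_combination (y : ℝ) * hπ + hu

end Generator

theorem lcomp_eq_zero_or_one {l : ℤ × ℤ} (hl : l ∈ Lset) (j : ℕ) :
    lcomp l j = 0 ∨ lcomp l j = 1 := by
  unfold lcomp
  split_ifs
  exacts [hl.1, hl.2]

theorem exists_mem_Lset_lcomp_eq (i : ℕ) (g : ℕ → ℤ) (hg : ∀ j, g j = 0 ∨ g j = 1) :
    ∃ l ∈ Lset, ∀ j ∈ conjS i, lcomp l j = g j := by
  unfold conjS
  split_ifs
  · exact ⟨(g 4, g 3), ⟨hg 4, hg 3⟩, by simp [lcomp, Nat.even_iff]⟩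
  · exact ⟨(g 2, g 1), ⟨hg 2, hg 1⟩, by simp [lcomp, Nat.even_iff]⟩

theorem mul_sub_max_zero_nonpos {c : ℤ} (hc : c = 0 ∨ c = 1) (m : ℝ) :
    (c : ℝ) * m - max m 0 ≤ 0 := by
  rcases hc with rfl | rfl <;> simp

theorem ite_pos_mul_sub_max_zero (m : ℝ) :
    ((if 0 < m then 1 else 0 : ℤ) : ℝ) * m - max m 0 = 0 := by
  split_ifs with h
  · simp [h.le]
  · simp [not_lt.1 h]

theorem stmt14_general (T δ ε : ℝ) (K : ℕ)
    (hp hm : ℝ → ℝ)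
    (lp lm : ℝ → ℝ)
    (tp tm : ℕ → ℝ)
    (π pT pS : ℝ → ℝ → ℕ → ℝ → ℝ)
    (hπderiv : ∀ i ∈ stateS, ∀ t p s : ℝ,
      t ∈ Set.Ioo (0:ℝ) T → p ∈ Set.Ioi (0:ℝ) → s ∈ Set.Ioi (0:ℝ) →
        HasDerivAt (fun t' => π t' p i s) (pT t p i s) t ∧
        HasDerivAt (fun s' => π t p i s') (pS t p i s) s)
    (hπcont : ∀ i ∈ stateS,
      ContinuousOn (fun x : ℝ × ℝ × ℝ => pT x.1 x.2.1 i x.2.2)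
        (Set.Ioo 0 T ×ˢ Set.Ioi 0 ×ˢ Set.Ioi 0) ∧
      ContinuousOn (fun x : ℝ × ℝ × ℝ => pS x.1 x.2.1 i x.2.2)
        (Set.Ioo 0 T ×ˢ Set.Ioi 0 ×ˢ Set.Ioi 0))
    (hπpde : ∀ i ∈ stateS, ∀ t p s : ℝ,
      t ∈ Set.Ioo (0:ℝ) T → p ∈ Set.Ioi (0:ℝ) → s ∈ Set.Ioi (0:ℝ) →
        pT t p i s + pS t p i s +
          (∑ j ∈ conjS i, hijf hp hm i j s *
            (π t (p * (1 + δ * alphaR j)) j 0 - π t p i s)) = 0)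
    (hπT : ∀ p s : ℝ, p ∈ Set.Ici (0:ℝ) → s ∈ Set.Ici (0:ℝ) → ∀ i ∈ stateS, π T p i s = p)
    (u Du : ℝ → ℝ → ℕ → ℝ → ℝ)
    (huderiv : ∀ i ∈ stateS, ∀ t p s : ℝ,
      t ∈ Set.Ioo (0:ℝ) T → p ∈ Set.Ioi (0:ℝ) → s ∈ Set.Ioi (0:ℝ) →
        HasDerivAt (fun e : ℝ => u (t + e) p i (s + e)) (Du t p i s) 0)
    (hupde : ∀ i ∈ stateS, ∀ t p s : ℝ,
      t ∈ Set.Ioo (0:ℝ) T → p ∈ Set.Ioi (0:ℝ) → s ∈ Set.Ioi (0:ℝ) →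
        Du t p i s +
          (∑ j ∈ conjS i, hijf hp hm i j s *
            (u t (p * (1 + δ * alphaR j)) j 0 - u t p i s)) +
          (∑ j ∈ conjS i, max (mjf δ ε K hp hm lp lm tp tm π i j t p s) 0) = 0)
    (huT : ∀ p s : ℝ, p ∈ Set.Ici (0:ℝ) → s ∈ Set.Ici (0:ℝ) → ∀ i ∈ stateS,
      u T p i s = 0) :
    (∀ i ∈ stateS, ∀ t p s x : ℝ, ∀ y : ℤ,
      t ∈ Set.Ioo (0:ℝ) T → p ∈ Set.Ioi (0:ℝ) → s ∈ Set.Ioi (0:ℝ) →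
        ∃ L : ℝ,
          HasDerivAt (fun e : ℝ => J0 π u (t + e) p i (s + e) x y) L 0 ∧
          (∀ l ∈ Lset, Aop δ ε K hp hm lp lm tp tm (J0 π u) L t p i s x y l ≤ 0) ∧
          (∃ lstar ∈ Lset,
            (∀ j ∈ conjS i, lcomp lstar j =
              if 0 < mjf δ ε K hp hm lp lm tp tm π i j t p s then 1 else 0) ∧
            Aop δ ε K hp hm lp lm tp tm (J0 π u) L t p i s x y lstar = 0)) ∧
    (∀ p s x : ℝ, ∀ y : ℤ, p ∈ Set.Ici (0:ℝ) → s ∈ Set.Ici (0:ℝ) → ∀ i ∈ stateS,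
      J0 π u T p i s x y = x + (y : ℝ) * p) := by
  refine ⟨fun i hi t p s x y ht hp0 hs0 => ?_, fun p s x y hp0 hs0 i hi => ?_⟩
  · set m := fun j => mjf δ ε K hp hm lp lm tp tm π i j t p s
    have hA := fun l => Aop_J0_eq_sum_sub_max (x := x) (y := y) l
      (hπpde i hi t p s ht hp0 hs0) (hupde i hi t p s ht hp0 hs0)
    obtain ⟨lstar, hlstar, hlstar_eq⟩ := exists_mem_Lset_lcomp_eq i
      (fun j => if 0 < m j then 1 else 0) fun j => by split_ifs <;> simp
    refine ⟨_, hasDerivAt_J0_diag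
      (hasDerivAt_diag_of_continuousOn_partials (hπderiv i hi) (hπcont i hi) ht hp0 hs0)
      (huderiv i hi t p s ht hp0 hs0), fun l hl => ?_, lstar, hlstar, hlstar_eq, ?_⟩
    · rw [hA]
      exact Finset.sum_nonpos fun j _ => mul_sub_max_zero_nonpos (lcomp_eq_zero_or_one hl j) _
    · rw [hA]
      exact Finset.sum_eq_zero fun j hj => by rw [hlstar_eq j hj]; exact ite_pos_mul_sub_max_zero _
  · simp [J0, hπT p s hp0 hs0 i hi, huT p s hp0 hs0 i hi]

/-- If `π ∈ V` solves the linear pde with terminal condition `π(T,p,i,s) = p`, and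
`u ∈ V` solves `D_{t,s}u + Σ_{j≢i} h_{ij}(s)(u(t,p(1+δα(j)),j,0) − u) + Σ_{j≢i} max{m_j,0} = 0`
with `u(T,·) = 0`, then for `J⁰ = x + yπ + u` : at every point of `D°` (any `x ∈ ℝ`, `y ∈ ℤ`)
the directional derivative of `J⁰` exists, `max_{l ∈ {0,1}²} 𝒜^l J⁰ = 0` with the maximum
attained at `l*` given by `l*^{ᾱ(j)} = 1_{m_j > 0}`, and `J⁰(T,p,i,s,x,y) = x + y p`. -/
theorem stmt14 (T δ ε : ℝ) (K : ℕ) (hT : 0 < T) (hδ : 0 < δ) (hε : 0 < ε)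
    (hp hm : ℝ → ℝ) (hA : hAssumptions hp hm)
    (lp lm : ℝ → ℝ)
    (hlnn : ∀ y ∈ Set.Ici (0:ℝ), 0 ≤ lp y ∧ 0 ≤ lm y)
    (hlcont : ContinuousOn lp (Set.Ici 0) ∧ ContinuousOn lm (Set.Ici 0))
    (hc2 : ∃ c2 : ℝ, ∀ y ∈ Set.Ici (0:ℝ), lp y ≤ c2 ∧ lm y ≤ c2)
    (tp tm : ℕ → ℝ)
    (htnn : ∀ k : ℕ, 0 ≤ tp k ∧ 0 ≤ tm k)
    (htsum : (∑ k ∈ Finset.range (K + 1), tp k) = 1 ∧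
             (∑ k ∈ Finset.range (K + 1), tm k) = 1)
    (π pT pS : ℝ → ℝ → ℕ → ℝ → ℝ) (hπ : memV T π)
    (hπderiv : ∀ i ∈ stateS, ∀ t p s : ℝ,
      t ∈ Set.Ioo (0:ℝ) T → p ∈ Set.Ioi (0:ℝ) → s ∈ Set.Ioi (0:ℝ) →
        HasDerivAt (fun t' => π t' p i s) (pT t p i s) t ∧
        HasDerivAt (fun s' => π t p i s') (pS t p i s) s)
    (hπcont : ∀ i ∈ stateS,
      ContinuousOn (fun x : ℝ × ℝ × ℝ => pT x.1 x.2.1 i x.2.2)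
        (Set.Ioo 0 T ×ˢ Set.Ioi 0 ×ˢ Set.Ioi 0) ∧
      ContinuousOn (fun x : ℝ × ℝ × ℝ => pS x.1 x.2.1 i x.2.2)
        (Set.Ioo 0 T ×ˢ Set.Ioi 0 ×ˢ Set.Ioi 0))
    (hπpde : ∀ i ∈ stateS, ∀ t p s : ℝ,
      t ∈ Set.Ioo (0:ℝ) T → p ∈ Set.Ioi (0:ℝ) → s ∈ Set.Ioi (0:ℝ) →
        pT t p i s + pS t p i s +
          (∑ j ∈ conjS i, hijf hp hm i j s *
            (π t (p * (1 + δ * alphaR j)) j 0 - π t p i s)) = 0)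
    (hπT : ∀ p s : ℝ, p ∈ Set.Ici (0:ℝ) → s ∈ Set.Ici (0:ℝ) → ∀ i ∈ stateS, π T p i s = p)
    (u Du : ℝ → ℝ → ℕ → ℝ → ℝ) (hu : memV T u)
    (huderiv : ∀ i ∈ stateS, ∀ t p s : ℝ,
      t ∈ Set.Ioo (0:ℝ) T → p ∈ Set.Ioi (0:ℝ) → s ∈ Set.Ioi (0:ℝ) →
        HasDerivAt (fun e : ℝ => u (t + e) p i (s + e)) (Du t p i s) 0)
    (hucont : ∀ i ∈ stateS,
      ContinuousOn (fun x : ℝ × ℝ × ℝ => Du x.1 x.2.1 i x.2.2)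
        (Set.Ioo 0 T ×ˢ Set.Ioi 0 ×ˢ Set.Ioi 0))
    (hupde : ∀ i ∈ stateS, ∀ t p s : ℝ,
      t ∈ Set.Ioo (0:ℝ) T → p ∈ Set.Ioi (0:ℝ) → s ∈ Set.Ioi (0:ℝ) →
        Du t p i s +
          (∑ j ∈ conjS i, hijf hp hm i j s *
            (u t (p * (1 + δ * alphaR j)) j 0 - u t p i s)) +
          (∑ j ∈ conjS i, max (mjf δ ε K hp hm lp lm tp tm π i j t p s) 0) = 0)
    (huT : ∀ p s : ℝ, p ∈ Set.Ici (0:ℝ) → s ∈ Set.Ici (0:ℝ) → ∀ i ∈ stateS,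
      u T p i s = 0) :
    (∀ i ∈ stateS, ∀ t p s x : ℝ, ∀ y : ℤ,
      t ∈ Set.Ioo (0:ℝ) T → p ∈ Set.Ioi (0:ℝ) → s ∈ Set.Ioi (0:ℝ) →
        ∃ L : ℝ,
          HasDerivAt (fun e : ℝ => J0 π u (t + e) p i (s + e) x y) L 0 ∧
          (∀ l ∈ Lset, Aop δ ε K hp hm lp lm tp tm (J0 π u) L t p i s x y l ≤ 0) ∧
          (∃ lstar ∈ Lset,
            (∀ j ∈ conjS i, lcomp lstar j =
              if 0 < mjf δ ε K hp hm lp lm tp tm π i j t p s then 1 else 0) ∧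
            Aop δ ε K hp hm lp lm tp tm (J0 π u) L t p i s x y lstar = 0)) ∧
    (∀ p s x : ℝ, ∀ y : ℤ, p ∈ Set.Ici (0:ℝ) → s ∈ Set.Ici (0:ℝ) → ∀ i ∈ stateS,
      J0 π u T p i s x y = x + (y : ℝ) * p) :=
  stmt14_general T δ ε K hp hm lp lm tp tm π pT pS hπderiv hπcont hπpde hπT u Du huderiv hupde huT
end
end
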